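/- arXiv:2104.02053 — 3 statements merged into one kernel-verified Lean document; each statement's English description precedes it below -/
import Mathlib

section
/- Let ρ and σ be density matrices on ℂ^D and T = ‖ρ − σ‖₁ / 2 their trace distance, so 0 ≤ T ≤ 1. Then |S(ρ) − S(σ)| ≤ T ln(D−1) − T ln T − (1−T) ln(1−T), where S denotes the von Neumann entropy and the binary-entropy terms are interpreted as 0 when T ∈ {0,1}. -/
/-!
Sort the eigenvalues of `ρ` and `σ` decreasingly. By Mirsky's inequality the two sorted eigenvalue
vectors are at total variation distance `t ≤ T`; Mirsky's inequality itself follows from Weyl's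
monotonicity of sorted eigenvalues, applied to `ρ, σ ≤ σ + (ρ - σ)₊`. This reduces the claim to the
classical bound `H(p) - H(q) ≤ qaryEntropy D t`, which is Fano's inequality for a maximal coupling
of `p` and `q`: its off-diagonal mass is exactly `t`.

Since `qaryEntropy D` increases only on `[0, 1 - 1/D]`, large `T` needs a separate argument: the
diagonal of `ρ` in an eigenbasis of `ρ - σ` shows that the smallest eigenvalue `λ` of `ρ` satisfies
`λ ≤ 1 - T`, so grouping all other eigenvalues gives `S(ρ) ≤ qaryEntropy D (1 - λ) ≤ qaryEntropy D T`,
and likewise for `σ`.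
-/

open scoped ComplexOrder

/-- The von Neumann entropy `S(ρ) = -tr(ρ ln ρ)` of a matrix, computed via eigenvalues
(junk value `0` if the matrix is not Hermitian). -/
noncomputable def vonNeumannEntropy {D : ℕ} (ρ : Matrix (Fin D) (Fin D) ℂ) : ℝ :=
  if h : ρ.IsHermitian then -∑ i, h.eigenvalues i * Real.log (h.eigenvalues i) else 0

open Finset
open scoped InnerProductSpace

namespace Real

lemma negMulLog_sum_le_sum_negMulLog {ι : Type*} (s : Finset ι) {f : ι → ℝ}
    (hf : ∀ i ∈ s, 0 ≤ f i) : negMulLog (∑ i ∈ s, f i) ≤ ∑ i ∈ s, negMulLog (f i) := by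
  rw [negMulLog, neg_mul, sum_mul, ← sum_neg_distrib]
  refine sum_le_sum fun i hi ↦ ?_
  rcases (hf i hi).eq_or_lt with h0 | h0
  · simp [← h0]
  · rw [negMulLog, neg_mul, neg_le_neg_iff]
    exact mul_le_mul_of_nonneg_left (log_le_log h0 (single_le_sum hf hi)) h0.le

lemma sum_negMulLog_le_negMulLog_sum_add {ι : Type*} (s : Finset ι) {f : ι → ℝ}
    (hf : ∀ i ∈ s, 0 ≤ f i) :
    ∑ i ∈ s, negMulLog (f i) ≤ negMulLog (∑ i ∈ s, f i) + (∑ i ∈ s, f i) * log #s := by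
  rcases s.eq_empty_or_nonempty with rfl | hs
  · simp
  have hcard : (0 : ℝ) < #s := by exact_mod_cast hs.card_pos
  have jensen := concaveOn_negMulLog.le_map_sum (t := s) (w := fun _ ↦ (#s : ℝ)⁻¹) (p := f)
    (fun _ _ ↦ by positivity) (by simp [hcard.ne']) hf
  rw [← smul_sum, ← smul_sum, smul_eq_mul, smul_eq_mul, negMulLog_mul,
    negMulLog, log_inv] at jensen
  have := mul_le_mul_of_nonneg_left jensen hcard.le
  field_simp at this
  linarith

lemma negMulLog_add_negMulLog (a b : ℝ) :
    negMulLog a + negMulLog b = negMulLog (a + b) + (a + b) * binEntropy (a / (a + b)) := by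
  rcases eq_or_ne (a + b) 0 with h | h
  · obtain rfl : b = -a := by linarith
    simp [negMulLog]
  have key (x : ℝ) : negMulLog x =
      x / (a + b) * negMulLog (a + b) + (a + b) * negMulLog (x / (a + b)) := by
    rw [← negMulLog_mul, mul_div_cancel₀ _ h]
  rw [key a, key b, binEntropy_eq_negMulLog_add_negMulLog_one_sub,
    show 1 - a / (a + b) = b / (a + b) by field_simp; ring]
  field_simp
  ring

lemma qaryEntropy_eq (q : ℕ) (t : ℝ) :
    qaryEntropy q t = t * log ((q : ℝ) - 1) - t * log t - (1 - t) * log (1 - t) := by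
  simp [qaryEntropy, binEntropy, log_inv]
  ring

lemma qaryEntropy_monotoneOn {q : ℕ} (hq : 1 ≤ q) :
    MonotoneOn (qaryEntropy q) (Set.Icc 0 (1 - 1 / q)) := by
  rcases hq.eq_or_lt with rfl | hq
  · exact (Set.subsingleton_Icc_of_ge (by norm_num)).monotoneOn _
  · exact (qaryEntropy_strictMonoOn hq).monotoneOn

variable {ι : Type*} [Fintype ι]

lemma sum_abs_eq_two_mul_sum_max_sub_sum (x : ι → ℝ) :
    ∑ i, |x i| = 2 * ∑ i, max (x i) 0 - ∑ i, x i := by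
  rw [mul_sum, ← sum_sub_distrib]
  refine sum_congr rfl fun i _ ↦ ?_
  linarith [max_zero_add_max_neg_zero_eq_abs_self (x i), max_zero_sub_max_neg_zero_eq_self (x i)]

lemma half_sum_abs_sub_eq_sum_max {p q : ι → ℝ} (h : ∑ i, p i = ∑ i, q i) :
    (∑ i, |p i - q i|) / 2 = ∑ i, max (p i - q i) 0 := by
  rw [sum_abs_eq_two_mul_sum_max_sub_sum, sum_sub_distrib, h]
  ring

lemma half_sum_abs_sub_le_one_sub {p q : ι → ℝ} (hp : p ∈ stdSimplex ℝ ι)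
    (hq : q ∈ stdSimplex ℝ ι) {m : ℝ} (hm : ∀ i, m ≤ p i) :
    (∑ i, |p i - q i|) / 2 ≤ 1 - m := by
  classical
  obtain ⟨k, hk⟩ : ∃ k, p k ≤ q k := by
    by_contra! h
    have : (univ : Finset ι).Nonempty := nonempty_of_sum_ne_zero (f := p) (by simp [hp.2])
    linarith [sum_lt_sum_of_nonempty this fun i _ ↦ h i, hp.2, hq.2]
  rw [half_sum_abs_sub_eq_sum_max (hp.2.trans hq.2.symm), ← sum_erase_add _ _ (mem_univ k),
    max_eq_right (by linarith), add_zero]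
  calc _ ≤ ∑ i ∈ univ.erase k, p i :=
        sum_le_sum fun i _ ↦ max_le (by linarith [hq.1 i]) (hp.1 i)
    _ = 1 - p k := by rw [sum_erase_eq_sub (mem_univ k), hp.2]
    _ ≤ 1 - m := by linarith [hm k]

lemma sum_negMulLog_le_negMulLog_sum_add_qaryEntropy {v : ι → ℝ} (hv : ∀ i, 0 ≤ v i) (k : ι) :
    ∑ i, negMulLog (v i) ≤ negMulLog (∑ i, v i)
      + (∑ i, v i) * qaryEntropy (Fintype.card ι) ((∑ i, v i - v k) / ∑ i, v i) := by
  classical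
  set s := ∑ i, v i
  have hrest : ∑ i ∈ univ.erase k, v i = s - v k := sum_erase_eq_sub (mem_univ k)
  have hcard : ((#(univ.erase k) : ℕ) : ℝ) = (Fintype.card ι : ℤ) - 1 := by
    rw [card_erase_of_mem (mem_univ k), card_univ,
      Nat.cast_sub (Fintype.card_pos_iff.mpr ⟨k⟩)]
    push_cast
    ring
  have hs : s * ((s - v k) / s) = s - v k := by
    rcases eq_or_ne s 0 with h | h
    · have : v k = 0 := le_antisymm (h ▸ single_le_sum (fun i _ ↦ hv i) (mem_univ k)) (hv k)
      simp [h, this]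
    · field_simp
  have hsplit := negMulLog_add_negMulLog (s - v k) (v k)
  rw [sub_add_cancel] at hsplit
  have hgroup := sum_negMulLog_le_negMulLog_sum_add (univ.erase k) (fun i _ ↦ hv i)
  rw [hrest, hcard] at hgroup
  rw [← sum_erase_add _ _ (mem_univ k), qaryEntropy]
  calc _ ≤ negMulLog (s - v k) + (s - v k) * log ((Fintype.card ι : ℤ) - 1 : ℤ)
        + negMulLog (v k) := by
        push_cast at hgroup ⊢
        linarith
    _ = _ := by rw [add_right_comm, hsplit, mul_add, ← mul_assoc, hs]; ring

/-- Fano's inequality. -/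
theorem sum_sum_negMulLog_le_add_qaryEntropy {w : ι → ι → ℝ} (hw : ∀ i j, 0 ≤ w i j)
    (h1 : ∑ i, ∑ j, w i j = 1) :
    ∑ i, ∑ j, negMulLog (w i j)
      ≤ ∑ i, negMulLog (∑ j, w i j) + qaryEntropy (Fintype.card ι) (1 - ∑ i, w i i) := by
  set p := fun i ↦ ∑ j, w i j
  set e := fun i ↦ (p i - w i i) / p i
  have hp : ∀ i, 0 ≤ p i := fun i ↦ sum_nonneg fun j _ ↦ hw i j
  have hwp : ∀ i, w i i ≤ p i := fun i ↦ single_le_sum (fun j _ ↦ hw i j) (mem_univ i)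
  have hpe : ∀ i, p i * e i = p i - w i i := fun i ↦
    mul_div_cancel_of_imp' fun h ↦ by linarith [hwp i, hw i i]
  have he : ∀ i, e i ∈ Set.Icc (0 : ℝ) 1 := fun i ↦
    ⟨div_nonneg (by linarith [hwp i]) (hp i), div_le_one_of_le₀ (by linarith [hw i i]) (hp i)⟩
  have hrows : ∀ i, ∑ j, negMulLog (w i j)
      ≤ negMulLog (p i) + p i * qaryEntropy (Fintype.card ι) (e i) :=
    fun i ↦ sum_negMulLog_le_negMulLog_sum_add_qaryEntropy (hw i) i
  have jensen := (strictConcaveOn_qaryEntropy (q := Fintype.card ι)).concaveOn.le_map_sum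
    (t := univ) (w := p) (p := e) (fun i _ ↦ hp i) h1 (fun i _ ↦ he i)
  simp only [smul_eq_mul, hpe, sum_sub_distrib, h1] at jensen
  calc _ ≤ ∑ i, (negMulLog (p i) + p i * qaryEntropy (Fintype.card ι) (e i)) :=
        sum_le_sum fun i _ ↦ hrows i
    _ ≤ _ := by rw [sum_add_distrib]; linarith

lemma exists_coupling {p q : ι → ℝ} (hp : p ∈ stdSimplex ℝ ι) (hq : q ∈ stdSimplex ℝ ι) :
    ∃ w : ι → ι → ℝ, (∀ i j, 0 ≤ w i j) ∧ (∀ i, ∑ j, w i j = p i) ∧ (∀ j, ∑ i, w i j = q j) ∧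
      ∑ i, w i i = 1 - (∑ i, |p i - q i|) / 2 := by
  classical
  set a := fun i ↦ max (p i - q i) 0
  set b := fun i ↦ max (q i - p i) 0
  set t := ∑ i, a i
  have hpa : ∀ i, min (p i) (q i) + a i = p i := fun i ↦ by
    rcases le_total (p i) (q i) with h | h <;> simp [a, h]
  have hqb : ∀ i, min (p i) (q i) + b i = q i := fun i ↦ by
    rcases le_total (p i) (q i) with h | h <;> simp [b, h]
  have hab : ∀ i, a i * b i = 0 := fun i ↦ by
    rcases le_total (p i) (q i) with h | h <;> simp [a, b, h]
  have ht : (∑ i, |p i - q i|) / 2 = t := half_sum_abs_sub_eq_sum_max (hp.2.trans hq.2.symm)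
  have hbt : ∑ i, b i = t := by
    rw [← ht, ← half_sum_abs_sub_eq_sum_max (hq.2.trans hp.2.symm)]
    simp_rw [abs_sub_comm (q _)]
  have ha0 : t = 0 → ∀ i, a i = 0 := fun h i ↦
    (sum_eq_zero_iff_of_nonneg fun i _ ↦ le_max_right _ _).mp h i (mem_univ i)
  have hb0 : t = 0 → ∀ j, b j = 0 := fun h j ↦
    (sum_eq_zero_iff_of_nonneg fun i _ ↦ le_max_right _ _).mp (hbt.trans h) j (mem_univ j)
  -- the common part `min p q` stays on the diagonal; the disjointly supported excesses `a` of `p`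
  -- and `b` of `q`, both of mass `t`, are coupled independently
  refine ⟨fun i j ↦ (if i = j then min (p i) (q i) else 0) + a i * b j / t, fun i j ↦ ?_,
    fun i ↦ ?_, fun j ↦ ?_, ?_⟩
  · have : 0 ≤ min (p i) (q i) := le_min (hp.1 i) (hq.1 i)
    have : 0 ≤ a i * b j / t := by positivity
    dsimp only
    split_ifs <;> linarith
  · rw [sum_add_distrib, sum_ite_eq, if_pos (mem_univ i), ← sum_div, ← mul_sum, hbt,
      mul_div_cancel_of_imp (ha0 · i), hpa]
  · rw [sum_add_distrib, sum_ite_eq', if_pos (mem_univ j), ← sum_div, ← sum_mul,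
      mul_div_assoc, mul_div_cancel_of_imp' (hb0 · j), hqb]
  · simp only [if_pos, hab, zero_div, add_zero, ht]
    rw [← hp.2, ← sum_sub_distrib]
    exact sum_congr rfl fun i _ ↦ by linarith [hpa i]

theorem sum_negMulLog_sub_le_qaryEntropy {p q : ι → ℝ} (hp : p ∈ stdSimplex ℝ ι)
    (hq : q ∈ stdSimplex ℝ ι) :
    ∑ i, negMulLog (q i) - ∑ i, negMulLog (p i)
      ≤ qaryEntropy (Fintype.card ι) ((∑ i, |p i - q i|) / 2) := by
  obtain ⟨w, hw, hrow, hcol, hdiag⟩ := exists_coupling hp hq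
  have hmarginal : ∑ j, negMulLog (q j) ≤ ∑ i, ∑ j, negMulLog (w i j) := by
    rw [sum_comm]
    exact sum_le_sum fun j _ ↦ hcol j ▸ negMulLog_sum_le_sum_negMulLog _ fun i _ ↦ hw i j
  have hfano := sum_sum_negMulLog_le_add_qaryEntropy hw (by simp_rw [hrow, hp.2])
  simp only [hrow, hdiag, sub_sub_cancel] at hfano
  linarith

theorem abs_sum_negMulLog_sub_le_qaryEntropy {p q : ι → ℝ} (hp : p ∈ stdSimplex ℝ ι)
    (hq : q ∈ stdSimplex ℝ ι) :
    |∑ i, negMulLog (p i) - ∑ i, negMulLog (q i)|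
      ≤ qaryEntropy (Fintype.card ι) ((∑ i, |p i - q i|) / 2) := by
  refine abs_sub_le_iff.mpr ⟨?_, sum_negMulLog_sub_le_qaryEntropy hp hq⟩
  simpa only [abs_sub_comm (q _)] using sum_negMulLog_sub_le_qaryEntropy hq hp

lemma sum_negMulLog_le_qaryEntropy_of_le_one_sub {p : ι → ℝ} (hp : p ∈ stdSimplex ℝ ι) {k : ι} {t : ℝ}
    (ht : 1 - 1 / Fintype.card ι ≤ t) (hk : p k ≤ 1 - t) :
    ∑ i, negMulLog (p i) ≤ qaryEntropy (Fintype.card ι) t := by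
  have hgroup := sum_negMulLog_le_negMulLog_sum_add_qaryEntropy hp.1 k
  rw [hp.2, negMulLog_one, zero_add, one_mul, div_one] at hgroup
  refine hgroup.trans ?_
  rcases Nat.lt_or_ge 1 (Fintype.card ι) with hcard | hcard
  · exact (qaryEntropy_strictAntiOn hcard).antitoneOn ⟨ht, by linarith [hp.1 k]⟩
      ⟨by linarith, by linarith [hp.1 k]⟩ (by linarith)
  · have hpk : p k = 1 := by
      rw [← hp.2, eq_comm]
      exact sum_eq_single_of_mem k (mem_univ k) fun i _ hi ↦
        absurd (Fintype.card_le_one_iff.mp hcard i k) hi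
    rw [le_antisymm hcard (Fintype.card_pos_iff.mpr ⟨k⟩)] at ht
    norm_num at ht
    rw [show t = 1 - p k by linarith]

lemma sum_negMulLog_nonneg {p : ι → ℝ} (hp : p ∈ stdSimplex ℝ ι) :
    0 ≤ ∑ i, negMulLog (p i) :=
  sum_nonneg fun i _ ↦
    negMulLog_nonneg (hp.1 i) (hp.2 ▸ single_le_sum (fun j _ ↦ hp.1 j) (mem_univ i))

end Real

lemma Module.Basis.exists_ne_zero_repr_eq_zero {K V : Type*} [Field K] [AddCommGroup V]
    [Module K V] {n : ℕ} (b b' : Module.Basis (Fin n) K V) (k : Fin n) :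
    ∃ x ≠ 0, (∀ j < k, b.repr x j = 0) ∧ ∀ j, k < j → b'.repr x j = 0 := by
  classical
  have := b.finiteDimensional_of_finite
  let φ : V →ₗ[K] ({j : Fin n // j ≠ k} → K) :=
    LinearMap.pi fun j ↦ if (j : Fin n) < k then b.coord j else b'.coord j
  have hker : LinearMap.ker φ ≠ ⊥ := LinearMap.ker_ne_bot_of_finrank_lt <| by
    rw [Module.finrank_fintype_fun_eq_card, Fintype.card_subtype_compl, Fintype.card_fin,
      Module.finrank_eq_card_basis b, Fintype.card_fin, Fintype.card_unique]
    exact Nat.sub_one_lt_of_lt k.pos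
  obtain ⟨x, hx, hx0⟩ := Submodule.exists_mem_ne_zero_of_ne_bot hker
  have hφ (j : Fin n) (hj : j ≠ k) := congr_fun (LinearMap.mem_ker.mp hx) ⟨j, hj⟩
  refine ⟨x, hx0, fun j hj ↦ ?_, fun j hj ↦ ?_⟩
  · simpa [φ, hj] using hφ j hj.ne
  · simpa [φ, hj.not_gt] using hφ j hj.ne'

namespace LinearMap.IsSymmetric

variable {𝕜 E : Type*} [RCLike 𝕜] [NormedAddCommGroup E] [InnerProductSpace 𝕜 E]
  [FiniteDimensional 𝕜 E] {n : ℕ} (hn : Module.finrank 𝕜 E = n) {T S : E →ₗ[𝕜] E}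

lemma re_inner_apply_self_eq_sum (hT : T.IsSymmetric) (x : E) :
    RCLike.re ⟪x, T x⟫_𝕜
      = ∑ i, hT.eigenvalues hn i * ‖(hT.eigenvectorBasis hn).repr x i‖ ^ 2 := by
  rw [← (hT.eigenvectorBasis hn).repr.inner_map_map, PiLp.inner_apply, map_sum]
  refine sum_congr rfl fun i _ ↦ ?_
  rw [hT.eigenvectorBasis_apply_self_apply, RCLike.inner_apply, mul_assoc, RCLike.mul_conj]
  norm_cast

lemma mul_norm_sq_le_re_inner_apply_self (hT : T.IsSymmetric) {x : E} {c : ℝ}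
    (hc : ∀ i, (hT.eigenvectorBasis hn).repr x i ≠ 0 → c ≤ hT.eigenvalues hn i) :
    c * ‖x‖ ^ 2 ≤ RCLike.re ⟪x, T x⟫_𝕜 := by
  rw [hT.re_inner_apply_self_eq_sum hn, ← (hT.eigenvectorBasis hn).repr.norm_map,
    EuclideanSpace.norm_sq_eq, mul_sum]
  refine sum_le_sum fun i _ ↦ ?_
  by_cases h : (hT.eigenvectorBasis hn).repr x i = 0
  · simp [h]
  · exact mul_le_mul_of_nonneg_right (hc i h) (sq_nonneg _)

lemma re_inner_apply_self_le_mul_norm_sq (hT : T.IsSymmetric) {x : E} {c : ℝ}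
    (hc : ∀ i, (hT.eigenvectorBasis hn).repr x i ≠ 0 → hT.eigenvalues hn i ≤ c) :
    RCLike.re ⟪x, T x⟫_𝕜 ≤ c * ‖x‖ ^ 2 := by
  rw [hT.re_inner_apply_self_eq_sum hn, ← (hT.eigenvectorBasis hn).repr.norm_map,
    EuclideanSpace.norm_sq_eq, mul_sum]
  refine sum_le_sum fun i _ ↦ ?_
  by_cases h : (hT.eigenvectorBasis hn).repr x i = 0
  · simp [h]
  · exact mul_le_mul_of_nonneg_right (hc i h) (sq_nonneg _)

/-- Weyl's monotonicity theorem. -/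
theorem eigenvalues_le_eigenvalues (hT : T.IsSymmetric) (hS : S.IsSymmetric)
    (hTS : ∀ x, RCLike.re ⟪x, T x⟫_𝕜 ≤ RCLike.re ⟪x, S x⟫_𝕜) (k : Fin n) :
    hT.eigenvalues hn k ≤ hS.eigenvalues hn k := by
  obtain ⟨x, hx0, hS0, hT0⟩ := Module.Basis.exists_ne_zero_repr_eq_zero
    (hS.eigenvectorBasis hn).toBasis (hT.eigenvectorBasis hn).toBasis k
  simp only [OrthonormalBasis.coe_toBasis_repr_apply] at hS0 hT0
  have hlow := hT.mul_norm_sq_le_re_inner_apply_self hn (x := x) fun j hj ↦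
    hT.eigenvalues_antitone hn (not_lt.mp fun hkj ↦ hj (hT0 j hkj))
  have hup := hS.re_inner_apply_self_le_mul_norm_sq hn (x := x) fun j hj ↦
    hS.eigenvalues_antitone hn (not_lt.mp fun hjk ↦ hj (hS0 j hjk))
  exact le_of_mul_le_mul_right ((hlow.trans (hTS x)).trans hup) (by positivity)

end LinearMap.IsSymmetric

namespace Matrix

variable {𝕜 : Type*} [RCLike 𝕜] {n : Type*} [Fintype n] [DecidableEq n] {A B : Matrix n n 𝕜}

lemma inner_toEuclideanLin (A : Matrix n n 𝕜) (x : EuclideanSpace 𝕜 n) :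
    ⟪x, toEuclideanLin A x⟫_𝕜 = star (WithLp.ofLp x) ⬝ᵥ A *ᵥ WithLp.ofLp x := by
  rw [EuclideanSpace.inner_eq_star_dotProduct, dotProduct_comm]
  rfl

lemma trace_toEuclideanLin (A : Matrix n n 𝕜) :
    LinearMap.trace 𝕜 _ (toEuclideanLin A) = A.trace := by
  rw [LinearMap.trace_eq_matrix_trace 𝕜 (PiLp.basisFun 2 𝕜 n), toEuclideanLin, toLpLin_eq_toLin,
    LinearMap.toMatrix_toLin]

namespace IsHermitian

lemma sum_eigenvalues₀_comp {M : Type*} [AddCommMonoid M] (hA : A.IsHermitian) (f : ℝ → M) :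
    ∑ k, f (hA.eigenvalues₀ k) = ∑ i, f (hA.eigenvalues i) :=
  (Equiv.sum_comp (Fintype.equivOfCardEq (Fintype.card_fin _)).symm _).symm

lemma re_trace_eq_sum_eigenvalues (hA : A.IsHermitian) :
    RCLike.re A.trace = ∑ i, hA.eigenvalues i := by
  simp [hA.trace_eq_sum_eigenvalues]

lemma re_trace_eq_sum_eigenvalues₀ (hA : A.IsHermitian) :
    RCLike.re A.trace = ∑ k, hA.eigenvalues₀ k :=
  hA.re_trace_eq_sum_eigenvalues.trans (hA.sum_eigenvalues₀_comp id).symm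

lemma le_re_inner_toEuclideanLin (hA : A.IsHermitian) {c : ℝ} (hc : ∀ k, c ≤ hA.eigenvalues₀ k)
    {x : EuclideanSpace 𝕜 n} (hx : ‖x‖ = 1) : c ≤ RCLike.re ⟪x, toEuclideanLin A x⟫_𝕜 := by
  simpa [hx] using (isSymmetric_toEuclideanLin_iff.mpr hA).mul_norm_sq_le_re_inner_apply_self
    finrank_euclideanSpace (x := x) fun k _ ↦ hc k

lemma eigenvalues₀_le_eigenvalues₀ (hA : A.IsHermitian) (hB : B.IsHermitian)
    (hAB : (B - A).PosSemidef) (k : Fin (Fintype.card n)) :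
    hA.eigenvalues₀ k ≤ hB.eigenvalues₀ k :=
  LinearMap.IsSymmetric.eigenvalues_le_eigenvalues _ _ _ (fun x ↦ by
    have := hAB.re_dotProduct_nonneg (WithLp.ofLp x)
    rw [sub_mulVec, dotProduct_sub, map_sub] at this
    rw [inner_toEuclideanLin, inner_toEuclideanLin]
    linarith) k

lemma exists_posPart (hA : A.IsHermitian) :
    ∃ P : Matrix n n 𝕜, P.PosSemidef ∧ (P - A).PosSemidef ∧
      RCLike.re P.trace = ∑ i, max (hA.eigenvalues i) 0 := by
  have hconj {d : n → ℝ} (hd : ∀ i, 0 ≤ d i) : (Unitary.conjStarAlgAut 𝕜 _ hA.eigenvectorUnitary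
      (diagonal (RCLike.ofReal ∘ d))).PosSemidef := by
    simpa [IsUnit.posSemidef_star_right_conjugate_iff Unitary.isUnit_coe,
      posSemidef_diagonal_iff] using hd
  refine ⟨hA.cfc (max · 0), hconj fun i ↦ le_max_right _ _, ?_, ?_⟩
  · nth_rw 2 [hA.spectral_theorem]
    rw [IsHermitian.cfc, ← map_sub, diagonal_sub]
    convert hconj (d := fun i ↦ max (hA.eigenvalues i) 0 - hA.eigenvalues i)
      (fun i ↦ sub_nonneg.mpr (le_max_left _ _)) using 2
    ext i j
    simp [diagonal_apply]
  · rw [IsHermitian.cfc, Unitary.conjStarAlgAut_apply, trace_mul_cycle, Unitary.coe_star_mul_self,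
      one_mul, trace_diagonal, map_sum]
    simp

/-- Mirsky's inequality for the trace norm. -/
theorem sum_abs_eigenvalues₀_sub_le (hA : A.IsHermitian) (hB : B.IsHermitian) :
    ∑ k, |hA.eigenvalues₀ k - hB.eigenvalues₀ k| ≤ ∑ i, |(hA.sub hB).eigenvalues i| := by
  obtain ⟨P, hP, hPA, hPtr⟩ := (hA.sub hB).exists_posPart
  have hω : (B + P).IsHermitian := hB.add hP.1
  have hAω := hA.eigenvalues₀_le_eigenvalues₀ hω (by rwa [show B + P - A = P - (A - B) by abel])
  have hBω := hB.eigenvalues₀_le_eigenvalues₀ hω (by rwa [add_sub_cancel_left])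
  calc ∑ k, |hA.eigenvalues₀ k - hB.eigenvalues₀ k|
      ≤ ∑ k, (2 * hω.eigenvalues₀ k - hA.eigenvalues₀ k - hB.eigenvalues₀ k) :=
        sum_le_sum fun k _ ↦ abs_sub_le_iff.mpr
          ⟨by linarith [hAω k, hBω k], by linarith [hAω k, hBω k]⟩
    _ = 2 * ∑ i, max ((hA.sub hB).eigenvalues i) 0 - ∑ i, (hA.sub hB).eigenvalues i := by
        simp only [sum_sub_distrib, ← mul_sum, ← re_trace_eq_sum_eigenvalues₀,
          ← re_trace_eq_sum_eigenvalues, trace_add, trace_sub, map_add, map_sub, hPtr]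
        ring
    _ = ∑ i, |(hA.sub hB).eigenvalues i| := (Real.sum_abs_eq_two_mul_sum_max_sub_sum _).symm

end IsHermitian

namespace PosSemidef

lemma eigenvalues₀_mem_stdSimplex (hA : A.PosSemidef) (htr : A.trace = 1) :
    hA.1.eigenvalues₀ ∈ stdSimplex ℝ (Fin (Fintype.card n)) :=
  ⟨fun k ↦ by
      simpa [IsHermitian.eigenvalues] using
        hA.eigenvalues_nonneg (Fintype.equivOfCardEq (Fintype.card_fin _) k),
    by rw [← hA.1.re_trace_eq_sum_eigenvalues₀, htr, RCLike.one_re]⟩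

lemma re_inner_toEuclideanLin_mem_stdSimplex (hA : A.PosSemidef) (htr : A.trace = 1)
    {ι : Type*} [Fintype ι] (u : OrthonormalBasis ι 𝕜 (EuclideanSpace 𝕜 n)) :
    (fun i ↦ RCLike.re ⟪u i, toEuclideanLin A (u i)⟫_𝕜) ∈ stdSimplex ℝ ι :=
  ⟨fun i ↦ by dsimp only; rw [inner_toEuclideanLin]; exact hA.re_dotProduct_nonneg _,
    by rw [← map_sum, ← LinearMap.trace_eq_sum_inner, trace_toEuclideanLin, htr, RCLike.one_re]⟩

theorem half_sum_abs_eigenvalues_sub_le (hA : A.PosSemidef) (hB : B.PosSemidef)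
    (hAtr : A.trace = 1) (hBtr : B.trace = 1) (hAB : (A - B).IsHermitian) {a b : ℝ}
    (ha : ∀ k, a ≤ hA.1.eigenvalues₀ k) (hb : ∀ k, b ≤ hB.1.eigenvalues₀ k) :
    (∑ i, |hAB.eigenvalues i|) / 2 ≤ 1 - a ∧ (∑ i, |hAB.eigenvalues i|) / 2 ≤ 1 - b := by
  set u := hAB.eigenvectorBasis
  have hdiag : ∀ i, hAB.eigenvalues i = RCLike.re ⟪u i, toEuclideanLin A (u i)⟫_𝕜
      - RCLike.re ⟪u i, toEuclideanLin B (u i)⟫_𝕜 := fun i ↦ by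
    simp [u, hAB.eigenvalues_eq, inner_toEuclideanLin, sub_mulVec, dotProduct_sub]
  have hp := hA.re_inner_toEuclideanLin_mem_stdSimplex hAtr u
  have hq := hB.re_inner_toEuclideanLin_mem_stdSimplex hBtr u
  simp_rw [hdiag]
  refine ⟨Real.half_sum_abs_sub_le_one_sub hp hq fun i ↦
    hA.1.le_re_inner_toEuclideanLin ha (u.norm_eq_one i), ?_⟩
  simpa only [abs_sub_comm] using Real.half_sum_abs_sub_le_one_sub hq hp fun i ↦
    hB.1.le_re_inner_toEuclideanLin hb (u.norm_eq_one i)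

theorem exists_eigenvalues₀_le_one_sub (hA : A.PosSemidef) (hB : B.PosSemidef)
    (hAtr : A.trace = 1) (hBtr : B.trace = 1) (hAB : (A - B).IsHermitian) :
    (∃ k, hA.1.eigenvalues₀ k ≤ 1 - (∑ i, |hAB.eigenvalues i|) / 2) ∧
      ∃ k, hB.1.eigenvalues₀ k ≤ 1 - (∑ i, |hAB.eigenvalues i|) / 2 := by
  have hne : (univ : Finset (Fin (Fintype.card n))).Nonempty := nonempty_of_sum_ne_zero
    (f := hA.1.eigenvalues₀) (by simp [(hA.eigenvalues₀_mem_stdSimplex hAtr).2])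
  obtain ⟨k, -, hk⟩ := exists_min_image univ hA.1.eigenvalues₀ hne
  obtain ⟨l, -, hl⟩ := exists_min_image univ hB.1.eigenvalues₀ hne
  obtain ⟨hTk, hTl⟩ := hA.half_sum_abs_eigenvalues_sub_le hB hAtr hBtr hAB
    (fun j ↦ hk j (mem_univ j)) (fun j ↦ hl j (mem_univ j))
  exact ⟨⟨k, by linarith⟩, ⟨l, by linarith⟩⟩

end PosSemidef

end Matrix

open Real

lemma vonNeumannEntropy_eq_sum_negMulLog_eigenvalues₀ {D : ℕ} {ρ : Matrix (Fin D) (Fin D) ℂ}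
    (hρ : ρ.IsHermitian) : vonNeumannEntropy ρ = ∑ k, negMulLog (hρ.eigenvalues₀ k) := by
  rw [vonNeumannEntropy, dif_pos hρ, hρ.sum_eigenvalues₀_comp, ← sum_neg_distrib]
  simp [negMulLog]

/-- Fannes–Audenaert continuity bound: if `ρ, σ` are density matrices on `ℂ^D` and
`T = ‖ρ − σ‖₁/2` is their trace distance, then
`|S(ρ) − S(σ)| ≤ T ln(D−1) − T ln T − (1−T) ln(1−T)`
(with the convention `0 ln 0 = 0`, which is `Real.log 0 = 0` here). -/
theorem fannes_audenaert {D : ℕ}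
    (ρ σ : Matrix (Fin D) (Fin D) ℂ)
    (hρ : ρ.IsHermitian) (hσ : σ.IsHermitian)
    (hρpsd : ρ.PosSemidef) (hσpsd : σ.PosSemidef)
    (hρtr : ρ.trace = 1) (hσtr : σ.trace = 1)
    (T : ℝ) (hT : T = (∑ i, |(hρ.sub hσ).eigenvalues i|) / 2) :
    |vonNeumannEntropy ρ - vonNeumannEntropy σ|
      ≤ T * Real.log ((D : ℝ) - 1) - T * Real.log T - (1 - T) * Real.log (1 - T) := by
  rw [← qaryEntropy_eq, vonNeumannEntropy_eq_sum_negMulLog_eigenvalues₀ hρ,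
    vonNeumannEntropy_eq_sum_negMulLog_eigenvalues₀ hσ]
  have hcard : Fintype.card (Fin (Fintype.card (Fin D))) = D := by simp
  have hp := hρpsd.eigenvalues₀_mem_stdSimplex hρtr
  have hq := hσpsd.eigenvalues₀_mem_stdSimplex hσtr
  rcases le_or_gt T (1 - 1 / D) with hsmall | hlarge
  · have hmirsky := div_le_div_of_nonneg_right (hρ.sum_abs_eigenvalues₀_sub_le hσ) zero_le_two
    rw [← hT] at hmirsky
    have hD : 1 ≤ D := Nat.one_le_iff_ne_zero.mpr (by rintro rfl; simp [Matrix.trace] at hρtr)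
    exact (hcard ▸ abs_sum_negMulLog_sub_le_qaryEntropy hp hq).trans <| qaryEntropy_monotoneOn hD
      ⟨by positivity, hmirsky.trans hsmall⟩ ⟨hT ▸ by positivity, hsmall⟩ hmirsky
  · obtain ⟨⟨k, hk⟩, ⟨l, hl⟩⟩ :=
      hρpsd.exists_eigenvalues₀_le_one_sub hσpsd hρtr hσtr (hρ.sub hσ)
    rw [← hT] at hk hl
    have hSρ := sum_negMulLog_le_qaryEntropy_of_le_one_sub hp (t := T) (by rw [hcard]; linarith) hk
    have hSσ := sum_negMulLog_le_qaryEntropy_of_le_one_sub hq (t := T) (by rw [hcard]; linarith) hl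
    rw [hcard] at hSρ hSσ
    exact abs_sub_le_iff.mpr
      ⟨by linarith [sum_negMulLog_nonneg hq], by linarith [sum_negMulLog_nonneg hp]⟩
end

section
/- For integers d ≥ 2, −d ∫₀¹ x · (d−1)(1−x)^{d−2} · ln x dx = ∑_{k=2}^{d} 1/k. -/
/-!
With `m = d - 2`, the integrand is `(d - 1) x (1 - x)^m log x` and
`x (1 - x)^m = (1 - x)^m - (1 - x)^(m + 1)`, so everything reduces to
`∫₀¹ (1 - x)^n log x dx = -H_{n+1} / (n + 1)`. That integral is computed from the explicit
antiderivative `(log x (1 - (1 - x)^(n+1)) + ∑_{k ≤ n} (1 - x)^(k+1) / (k + 1)) / (n + 1)`,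
which extends continuously to `0` with value `H_{n+1} / (n + 1)` and vanishes at `1`.
-/

open Real Finset intervalIntegral

theorem mul_sum_range_one_sub_pow {R : Type*} [CommRing R] (x : R) (n : ℕ) :
    x * ∑ k ∈ range n, (1 - x) ^ k = 1 - (1 - x) ^ n := by
  simpa using mul_neg_geom_sum (1 - x) n

theorem sum_Icc_two_one_div_eq_harmonic_sub_one {d : ℕ} (hd : 1 ≤ d) :
    ∑ k ∈ Icc 2 d, (1 : ℝ) / k = harmonic d - 1 := by
  rw [harmonic_eq_sum_Icc, ← insert_Icc_add_one_left_eq_Icc hd, sum_insert (by simp)]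
  push_cast
  simp [one_div]

theorem hasDerivAt_one_sub_pow (n : ℕ) (x : ℝ) :
    HasDerivAt (fun y : ℝ => (1 - y) ^ (n + 1)) (-((n + 1) * (1 - x) ^ n)) x := by
  simpa using ((hasDerivAt_id x).const_sub 1).fun_pow (n + 1)

/-- Written through `x * log x` so that continuity at `0` is immediate. -/
noncomputable def oneSubPowMulLogAntideriv (n : ℕ) (x : ℝ) : ℝ :=
  (x * log x * ∑ k ∈ range (n + 1), (1 - x) ^ k
    + ∑ k ∈ range (n + 1), (1 - x) ^ (k + 1) / (k + 1)) / (n + 1)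

theorem oneSubPowMulLogAntideriv_eq (n : ℕ) : oneSubPowMulLogAntideriv n = fun x =>
    (log x * (1 - (1 - x) ^ (n + 1))
      + ∑ k ∈ range (n + 1), (1 - x) ^ (k + 1) / (k + 1)) / (n + 1) := by
  ext x
  rw [oneSubPowMulLogAntideriv, ← mul_sum_range_one_sub_pow]
  ring

theorem continuous_oneSubPowMulLogAntideriv (n : ℕ) :
    Continuous (oneSubPowMulLogAntideriv n) := by
  unfold oneSubPowMulLogAntideriv
  have := continuous_mul_log
  fun_prop

theorem hasDerivAt_oneSubPowMulLogAntideriv (n : ℕ) {x : ℝ} (hx : x ≠ 0) :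
    HasDerivAt (oneSubPowMulLogAntideriv n) ((1 - x) ^ n * log x) x := by
  have hsum : HasDerivAt (fun y : ℝ => ∑ k ∈ range (n + 1), (1 - y) ^ (k + 1) / (k + 1))
      (-∑ k ∈ range (n + 1), (1 - x) ^ k) x := by
    rw [← sum_neg_distrib]
    refine HasDerivAt.fun_sum fun k _ => ?_
    refine ((hasDerivAt_one_sub_pow k x).div_const ((k : ℝ) + 1)).congr_deriv ?_
    field_simp
  have h := ((hasDerivAt_log hx).fun_mul ((hasDerivAt_one_sub_pow n x).const_sub 1)).fun_add hsum
  rw [oneSubPowMulLogAntideriv_eq]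
  refine (h.div_const ((n : ℝ) + 1)).congr_deriv ?_
  rw [← mul_sum_range_one_sub_pow x]
  field_simp
  ring

theorem intervalIntegrable_one_sub_pow_mul_log (n : ℕ) (a b : ℝ) :
    IntervalIntegrable (fun x : ℝ => (1 - x) ^ n * log x) MeasureTheory.volume a b :=
  intervalIntegrable_log'.continuousOn_mul (by fun_prop)

theorem integral_one_sub_pow_mul_log (n : ℕ) :
    ∫ x in (0 : ℝ)..1, (1 - x) ^ n * log x = -harmonic (n + 1) / (n + 1) := by
  rw [integral_eq_sub_of_hasDerivAt_of_le zero_le_one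
    (continuous_oneSubPowMulLogAntideriv n).continuousOn
    (fun x hx => hasDerivAt_oneSubPowMulLogAntideriv n hx.1.ne')
    (intervalIntegrable_one_sub_pow_mul_log n 0 1)]
  simp [oneSubPowMulLogAntideriv, harmonic, neg_div]

theorem integral_mul_one_sub_pow_mul_log (n : ℕ) :
    ∫ x in (0 : ℝ)..1, x * (1 - x) ^ n * log x
      = harmonic (n + 2) / (n + 2) - harmonic (n + 1) / (n + 1) := by
  have hsplit : (fun x : ℝ => x * (1 - x) ^ n * log x)
      = fun x => (1 - x) ^ n * log x - (1 - x) ^ (n + 1) * log x := by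
    ext x
    ring
  rw [hsplit, integral_sub (intervalIntegrable_one_sub_pow_mul_log n 0 1)
    (intervalIntegrable_one_sub_pow_mul_log (n + 1) 0 1),
    integral_one_sub_pow_mul_log, integral_one_sub_pow_mul_log]
  push_cast
  ring

/-- The integral identity `−d ∫₀¹ x (d−1)(1−x)^{d−2} ln x dx = ∑_{k=2}^d 1/k` for `d ≥ 2`. -/
theorem neg_d_mul_integral_eq_harmonic (d : ℕ) (hd : 2 ≤ d) :
    -(d : ℝ) * ∫ x in (0 : ℝ)..1, x * ((d - 1 : ℝ) * (1 - x) ^ (d - 2)) * Real.log x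
      = ∑ k ∈ Finset.Icc 2 d, (1 : ℝ) / k := by
  obtain ⟨n, rfl⟩ := Nat.exists_eq_add_of_le' hd
  have hintegrand : ∀ x : ℝ, x * (((n + 2 : ℕ) - 1 : ℝ) * (1 - x) ^ (n + 2 - 2)) * log x
      = (n + 1) * (x * (1 - x) ^ n * log x) := by
    intro x
    push_cast
    ring
  simp_rw [hintegrand, integral_const_mul, integral_mul_one_sub_pow_mul_log,
    sum_Icc_two_one_div_eq_harmonic_sub_one (by omega : 1 ≤ n + 2), harmonic_succ]
  push_cast
  field_simp
  ring
end

section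
/- Let A be a Hermitian matrix whose spectrum has non-degenerate gaps and let B be any Hermitian matrix of the same size. Then for all sufficiently large Λ > 0, the spectrum of ΛA + B has non-degenerate gaps. -/
/-- A family of reals has non-degenerate gaps if all differences over ordered pairs of
distinct indices are pairwise distinct. -/
def NondegGaps {ι : Type*} (E : ι → ℝ) : Prop :=
  ∀ j k j' k' : ι, j ≠ k → E j - E k = E j' - E k' → j = j' ∧ k = k'

/-!
Write `E` for the eigenvalues of `A`. In an orthonormal eigenbasis, a unit vector `x` with
`‖T x - α x‖ ≤ C` forces an eigenvalue of `T` within `C` of `α`; testing `ΛA + B` on the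
eigenvectors of `ΛA` and vice versa puts every eigenvalue of either operator within `‖B‖` of one
of the other. Non-degenerate gaps give a `δ > 0` below every nonzero difference
`(E j - E k) - (E j' - E k')`, in particular below every `|E a - E b|` with `a ≠ b`. Once
`Λ δ > 4 ‖B‖` this closeness is a bijective matching of the two spectra, and every gap difference
of `ΛA + B` lies within `4 ‖B‖` of the matching one of `ΛA`, so it vanishes only when that one does.
-/

open Filter Topology

section GapsSeparated

variable {ι : Type*} {E F : ι → ℝ} {δ C : ℝ}

def GapsSeparated (δ : ℝ) (E : ι → ℝ) : Prop :=
  ∀ j k j' k' : ι, j ≠ k → ¬(j = j' ∧ k = k') → δ ≤ |(E j - E k) - (E j' - E k')|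

theorem NondegGaps.exists_gapsSeparated [Finite ι] (h : NondegGaps E) :
    ∃ δ > 0, GapsSeparated δ E := by
  have hsmall : ∀ᶠ δ in 𝓝[>] (0 : ℝ), GapsSeparated δ E := by
    simp only [GapsSeparated, eventually_all]
    intro j k j' k' hjk hne
    refine eventually_nhdsWithin_of_eventually_nhds (eventually_le_nhds ?_)
    exact abs_pos.2 (sub_ne_zero.2 fun heq => hne (h j k j' k' hjk heq))
  obtain ⟨δ, hδ, hδpos⟩ := (hsmall.and self_mem_nhdsWithin).exists
  exact ⟨δ, hδpos, hδ⟩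

theorem GapsSeparated.const_mul (h : GapsSeparated δ E) {c : ℝ} (hc : 0 ≤ c) :
    GapsSeparated (c * δ) (fun i => c * E i) := by
  intro j k j' k' hjk hne
  rw [← mul_sub, ← mul_sub, ← mul_sub, abs_mul, abs_of_nonneg hc]
  exact mul_le_mul_of_nonneg_left (h j k j' k' hjk hne) hc

theorem GapsSeparated.comp_injective {κ : Type*} (h : GapsSeparated δ E) {σ : κ → ι}
    (hσ : Function.Injective σ) : GapsSeparated δ (E ∘ σ) :=
  fun _ _ _ _ hjk hne => h _ _ _ _ (hσ.ne hjk) fun ⟨hj, hk⟩ => hne ⟨hσ hj, hσ hk⟩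

theorem GapsSeparated.le_abs_sub (h : GapsSeparated δ E) {a b : ι} (hab : a ≠ b) :
    δ ≤ |E a - E b| := by
  simpa using h a b a a hab fun h' => hab h'.2.symm

theorem GapsSeparated.nondegGaps_of_abs_sub_le (h : GapsSeparated δ E)
    (hF : ∀ i, |F i - E i| ≤ C) (hC : 4 * C < δ) : NondegGaps F := by
  intro j k j' k' hjk heq
  by_contra hne
  have hgap := h j k j' k' hjk hne
  obtain ⟨hj, hj'⟩ := abs_le.1 (hF j)
  obtain ⟨hk, hk'⟩ := abs_le.1 (hF k)
  obtain ⟨hl, hl'⟩ := abs_le.1 (hF j')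
  obtain ⟨hm, hm'⟩ := abs_le.1 (hF k')
  have hnear : |(E j - E k) - (E j' - E k')| ≤ 4 * C := abs_le.2 ⟨by linarith, by linarith⟩
  linarith

end GapsSeparated

theorem exists_injective_abs_sub_le {ι : Type*} [Finite ι] {μ E : ι → ℝ} {C : ℝ}
    (hμE : ∀ i, ∃ a, |E a - μ i| ≤ C) (hEμ : ∀ a, ∃ i, |μ i - E a| ≤ C)
    (hsep : ∀ a b, a ≠ b → 2 * C < |E a - E b|) :
    ∃ σ : ι → ι, Function.Injective σ ∧ ∀ i, |μ i - E (σ i)| ≤ C := by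
  choose σ hσ using hμE
  choose τ hτ using hEμ
  have hστ : ∀ a, σ (τ a) = a := by
    intro a
    by_contra hne
    have hle : |E (σ (τ a)) - E a| ≤ 2 * C := calc
      _ ≤ |E (σ (τ a)) - μ (τ a)| + |μ (τ a) - E a| := abs_sub_le _ _ _
      _ ≤ 2 * C := by linarith [hσ (τ a), hτ a]
    linarith [hsep _ _ hne]
  refine ⟨σ, Finite.injective_iff_surjective.2 fun a => ⟨τ a, hστ a⟩, fun i => ?_⟩
  rw [abs_sub_comm]
  exact hσ i

section Perturbation

variable {𝕜 V ι κ : Type*} [RCLike 𝕜] [NormedAddCommGroup V] [InnerProductSpace 𝕜 V]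
  [Fintype ι] [Fintype κ]

theorem OrthonormalBasis.exists_abs_sub_le_of_norm_apply_sub_smul_le
    (v : OrthonormalBasis ι 𝕜 V) {T : V →ₗ[𝕜] V} {μ : ι → ℝ} (hv : ∀ i, T (v i) = (μ i : 𝕜) • v i)
    {x : V} (hx : x ≠ 0) {α C : ℝ} (h : ‖T x - (α : 𝕜) • x‖ ≤ C * ‖x‖) :
    ∃ i, |μ i - α| ≤ C := by
  have hcoef : ∀ i,
      inner 𝕜 (v i) (T x - (α : 𝕜) • x) = ((μ i - α : ℝ) : 𝕜) * inner 𝕜 (v i) x := by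
    have hexp : T x - (α : 𝕜) • x = ∑ j, (((μ j - α : ℝ) : 𝕜) * inner 𝕜 (v j) x) • v j := by
      conv_lhs => rw [← v.sum_repr' x]
      simp only [map_sum, map_smul, hv, Finset.smul_sum, ← Finset.sum_sub_distrib, smul_smul,
        ← sub_smul]
      push_cast
      congr! 2
      ring
    intro i
    rw [hexp, v.orthonormal.inner_right_fintype]
  have : Nonempty ι := by
    by_contra hι
    rw [not_nonempty_iff] at hι
    exact hx (by simpa using (v.sum_repr' x).symm)
  obtain ⟨i₀, hi₀⟩ := Finite.exists_min fun i => |μ i - α|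
  refine ⟨i₀, ?_⟩
  have hxpos : 0 < ‖x‖ := norm_pos_iff.2 hx
  have hCx : 0 ≤ C * ‖x‖ := (norm_nonneg _).trans h
  have key : (|μ i₀ - α| * ‖x‖) ^ 2 ≤ (C * ‖x‖) ^ 2 := calc
    (|μ i₀ - α| * ‖x‖) ^ 2 = ∑ j, |μ i₀ - α| ^ 2 * ‖inner 𝕜 (v j) x‖ ^ 2 := by
      rw [mul_pow, ← v.sum_sq_norm_inner_right x, Finset.mul_sum]
    _ ≤ ∑ j, ‖((μ j - α : ℝ) : 𝕜) * inner 𝕜 (v j) x‖ ^ 2 := by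
      gcongr with j
      rw [norm_mul, RCLike.norm_ofReal, mul_pow]
      exact mul_le_mul_of_nonneg_right (pow_le_pow_left₀ (abs_nonneg _) (hi₀ j) 2) (by positivity)
    _ = ‖T x - (α : 𝕜) • x‖ ^ 2 := by
      simp_rw [← hcoef]
      exact v.sum_sq_norm_inner_right _
    _ ≤ (C * ‖x‖) ^ 2 := by gcongr
  exact le_of_mul_le_mul_right ((sq_le_sq₀ (by positivity) hCx).1 key) hxpos

theorem OrthonormalBasis.exists_abs_sub_le_of_norm_sub_le (u : OrthonormalBasis ι 𝕜 V)
    (v : OrthonormalBasis κ 𝕜 V) {S T : V →ₗ[𝕜] V} {μ : ι → ℝ} {ν : κ → ℝ}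
    (hu : ∀ i, S (u i) = (μ i : 𝕜) • u i) (hv : ∀ j, T (v j) = (ν j : 𝕜) • v j) {C : ℝ}
    (hST : ∀ x, ‖S x - T x‖ ≤ C * ‖x‖) (i : ι) : ∃ j, |ν j - μ i| ≤ C :=
  v.exists_abs_sub_le_of_norm_apply_sub_smul_le hv (u.orthonormal.ne_zero i) <| by
    rw [← hu i, norm_sub_rev]
    exact hST (u i)

end Perturbation

namespace Matrix.IsHermitian

variable {𝕜 n : Type*} [RCLike 𝕜] [Fintype n] [DecidableEq n] {A B : Matrix n n 𝕜}

theorem toEuclideanLin_eigenvectorBasis (hA : A.IsHermitian) (j : n) :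
    toEuclideanLin A (hA.eigenvectorBasis j) = (hA.eigenvalues j : 𝕜) • hA.eigenvectorBasis j := by
  rw [toLpLin_apply, hA.mulVec_eigenvectorBasis, RCLike.real_smul_eq_coe_smul (K := 𝕜)]
  rfl

theorem exists_abs_eigenvalues_smul_add_sub_le (hA : A.IsHermitian) {Λ : ℝ}
    (hAB : ((Λ : 𝕜) • A + B).IsHermitian) {C : ℝ}
    (hB : ∀ x, ‖toEuclideanLin B x‖ ≤ C * ‖x‖) :
    (∀ i, ∃ a, |Λ * hA.eigenvalues a - hAB.eigenvalues i| ≤ C) ∧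
      (∀ a, ∃ i, |hAB.eigenvalues i - Λ * hA.eigenvalues a| ≤ C) := by
  have hΛA : ∀ a, toEuclideanLin ((Λ : 𝕜) • A) (hA.eigenvectorBasis a) =
      ((Λ * hA.eigenvalues a : ℝ) : 𝕜) • hA.eigenvectorBasis a := by
    intro a
    rw [map_smul, LinearMap.smul_apply, hA.toEuclideanLin_eigenvectorBasis, smul_smul,
      RCLike.ofReal_mul]
  have hdiff : ∀ x, toEuclideanLin ((Λ : 𝕜) • A + B) x - toEuclideanLin ((Λ : 𝕜) • A) x =
      toEuclideanLin B x := by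
    intro x
    rw [map_add, LinearMap.add_apply, add_sub_cancel_left]
  constructor
  · exact hAB.eigenvectorBasis.exists_abs_sub_le_of_norm_sub_le hA.eigenvectorBasis
      hAB.toEuclideanLin_eigenvectorBasis hΛA fun x => (hdiff x).symm ▸ hB x
  · refine hA.eigenvectorBasis.exists_abs_sub_le_of_norm_sub_le hAB.eigenvectorBasis
      hΛA hAB.toEuclideanLin_eigenvectorBasis fun x => ?_
    rw [norm_sub_rev, hdiff]
    exact hB x

end Matrix.IsHermitian

theorem nondeg_gaps_of_large_scaling_general {D : ℕ}
    (A B : Matrix (Fin D) (Fin D) ℂ) (hA : A.IsHermitian)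
    (hAgaps : NondegGaps hA.eigenvalues) :
    ∃ Λ₀ : ℝ, 0 < Λ₀ ∧ ∀ Λ : ℝ, Λ₀ ≤ Λ →
      ∀ (hAB : ((Λ : ℂ) • A + B).IsHermitian), NondegGaps hAB.eigenvalues := by
  obtain ⟨δ, hδ, hgaps⟩ := hAgaps.exists_gapsSeparated
  obtain ⟨C, hC, hB⟩ : ∃ C, 0 ≤ C ∧ ∀ x, ‖Matrix.toEuclideanLin B x‖ ≤ C * ‖x‖ :=
    ⟨_, norm_nonneg _, (Matrix.toEuclideanCLM (𝕜 := ℂ) B).le_opNorm⟩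
  refine ⟨(4 * C + 1) / δ, by positivity, fun Λ hΛ hAB => ?_⟩
  have hΛδ : 4 * C < Λ * δ := by
    rw [div_le_iff₀ hδ] at hΛ
    linarith
  have hgapsΛ := hgaps.const_mul (le_trans (by positivity) hΛ)
  obtain ⟨hμE, hEμ⟩ := hA.exists_abs_eigenvalues_smul_add_sub_le hAB hB
  obtain ⟨σ, hσ, hclose⟩ := exists_injective_abs_sub_le hμE hEμ fun a b hab => by
    linarith [hgapsΛ.le_abs_sub hab]
  exact (hgapsΛ.comp_injective hσ).nondegGaps_of_abs_sub_le hclose hΛδ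

/-- If the Hermitian matrix `A` has a spectrum with non-degenerate gaps and `B` is any
Hermitian matrix of the same size, then for all sufficiently large `Λ > 0` the spectrum of
`ΛA + B` has non-degenerate gaps. -/
theorem nondeg_gaps_of_large_scaling {D : ℕ}
    (A B : Matrix (Fin D) (Fin D) ℂ) (hA : A.IsHermitian) (hB : B.IsHermitian)
    (hAgaps : NondegGaps hA.eigenvalues) :
    ∃ Λ₀ : ℝ, 0 < Λ₀ ∧ ∀ Λ : ℝ, Λ₀ ≤ Λ →
      ∀ (hAB : ((Λ : ℂ) • A + B).IsHermitian), NondegGaps hAB.eigenvalues :=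
  nondeg_gaps_of_large_scaling_general A B hA hAgaps
end
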